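/- arXiv:2103.05234 — 2 statements merged into one kernel-verified Lean document; each statement's English description precedes it below -/
import Mathlib

section
/- Let D_{2n} be the dihedral group of order 2n with n even, n ≥ 4. Then B_{D_{2n}}(t) = (1/(1−2t))(1 + (n−2)t/(2(1−nt)) + 2t/(1−4t)), where B_G(t) = Σ_{k≥0} β_{G,k} t^k and β_{G,k} is the number of orbits of G acting by simultaneous conjugation on commuting k-tuples. -/
/-- The simultaneous conjugation relation on `n`-tuples of elements of `G`. -/
def simulConjRel (G : Type*) [Group G] (n : ℕ) (x y : Fin n → G) : Prop :=
  ∃ g : G, ∀ i, g * x i * g⁻¹ = y i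

/-- `α_{G,n}`: the number of orbits of `G` acting on `Gⁿ` by simultaneous conjugation. -/
noncomputable def alphaCount (G : Type*) [Group G] (n : ℕ) : ℕ :=
  Nat.card (Quot (simulConjRel G n))

/-- Commuting `n`-tuples in `G`. -/
def CommTuple (G : Type*) [Group G] (n : ℕ) :=
  {x : Fin n → G // ∀ i j, Commute (x i) (x j)}

/-- `β_{G,n}`: the number of orbits of `G` acting on commuting `n`-tuples by
simultaneous conjugation. -/
noncomputable def betaCount (G : Type*) [Group G] (n : ℕ) : ℕ :=
  Nat.card (Quot (fun x y : CommTuple G n => simulConjRel G n x.1 y.1))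


namespace DPf
open DihedralGroup

/-! ### first index machinery -/

def IsFirst {k : ℕ} (P : Fin k → Prop) (j0 : Fin k) : Prop :=
  P j0 ∧ ∀ j, j < j0 → ¬ P j

lemma exists_isFirst {k : ℕ} {P : Fin k → Prop} (h : ∃ j, P j) : ∃ j0, IsFirst P j0 := by
  classical
  obtain ⟨j, hj⟩ := h
  have hS : (Finset.univ.filter P).Nonempty := ⟨j, by simpa using hj⟩
  refine ⟨(Finset.univ.filter P).min' hS, ?_, ?_⟩
  · simpa using Finset.min'_mem _ hS
  · intro i hi hPi
    exact absurd (Finset.min'_le _ i (by simpa using hPi)) (not_le.mpr hi)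

lemma isFirst_unique {k : ℕ} {P : Fin k → Prop} {j0 j1 : Fin k}
    (h0 : IsFirst P j0) (h1 : IsFirst P j1) : j0 = j1 := by
  rcases lt_trichotomy j0 j1 with h | h | h
  · exact absurd h0.1 (h1.2 _ h)
  · exact h
  · exact absurd h1.1 (h0.2 _ h)

lemma isFirst_congr {k : ℕ} {P Q : Fin k → Prop} (h : ∀ j, P j ↔ Q j) {j0 : Fin k}
    (h0 : IsFirst P j0) : IsFirst Q j0 :=
  ⟨(h j0).mp h0.1, fun j hj hQ => h0.2 j hj ((h j).mpr hQ)⟩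

/-! ### dihedral basics -/

variable {N : ℕ}

def IsRot : DihedralGroup N → Prop
  | r _ => True
  | sr _ => False

@[simp] lemma isRot_r (i : ZMod N) : IsRot (r i) := trivial
@[simp] lemma isRot_sr (i : ZMod N) : ¬ IsRot (sr i) := fun h => h

def ex : DihedralGroup N → ZMod N
  | r i => i
  | sr i => i

@[simp] lemma ex_r (i : ZMod N) : ex (r i) = i := rfl
@[simp] lemma ex_sr (i : ZMod N) : ex (sr i) = i := rfl

@[simp] lemma inv_r (i : ZMod N) : (r i)⁻¹ = r (-i) := rfl
@[simp] lemma inv_sr (i : ZMod N) : (sr i)⁻¹ = sr i := rfl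

lemma conj_r_r (g i : ZMod N) : r g * r i * (r g)⁻¹ = r i := by
  simp

lemma conj_r_sr (g c : ZMod N) : r g * sr c * (r g)⁻¹ = sr (c - 2*g) := by
  simp; ring_nf

lemma conj_sr_r (g i : ZMod N) : sr g * r i * (sr g)⁻¹ = r (-i) := by
  simp

lemma conj_sr_sr (g c : ZMod N) : sr g * sr c * (sr g)⁻¹ = sr (2*g - c) := by
  simp; ring_nf

lemma isRot_conj (g x : DihedralGroup N) : IsRot (g * x * g⁻¹) ↔ IsRot x := by
  cases g <;> cases x <;>
    simp [conj_r_r, conj_r_sr, conj_sr_r, conj_sr_sr]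

lemma commute_r_sr_iff (i c : ZMod N) : Commute (r i) (sr c) ↔ 2*i = 0 := by
  constructor
  · intro h
    have := h.eq
    simp only [r_mul_sr, sr_mul_r] at this
    have h2 : c - i = c + i := by injection this
    linear_combination -h2
  · intro h
    have h2 : c - i = c + i := by linear_combination -h
    unfold Commute SemiconjBy
    simp [h2]

lemma commute_sr_sr_iff (a b : ZMod N) : Commute (sr a) (sr b) ↔ 2*a = 2*b := by
  constructor
  · intro h
    have := h.eq
    simp only [sr_mul_sr] at this
    have h2 : b - a = a - b := by injection this
    linear_combination -h2
  · intro h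
    have h2 : b - a = a - b := by linear_combination -h
    unfold Commute SemiconjBy
    simp [h2]



 
variable {m : ℕ}

section
variable [NeZero (2*m)]

lemma val_two_mul (i : ZMod (2*m)) : (2*i).val = (i.val + i.val) % (2*m) := by
  rw [two_mul i, ZMod.val_add]

lemma cast_m_val (hm : 2 ≤ m) : ((m : ZMod (2*m))).val = m :=
  ZMod.val_cast_of_lt (by omega)

lemma two_mul_m : (2 * (m : ZMod (2*m)) : ZMod (2*m)) = 0 := by
  have : ((2 * m : ℕ) : ZMod (2*m)) = 0 := ZMod.natCast_self _
  push_cast at this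
  linear_combination this

lemma two_mul_eq_zero_iff (hm : 2 ≤ m) {i : ZMod (2*m)} :
    2 * i = 0 ↔ i = 0 ∨ i = (m : ZMod (2*m)) := by
  constructor
  · intro h
    have hv : (2 * i).val = 0 := by rw [h]; simp
    rw [val_two_mul] at hv
    have hlt : i.val < 2 * m := ZMod.val_lt i
    have hdvd : 2 * m ∣ 2 * i.val := by
      have h3 : i.val + i.val = 2 * i.val := by ring
      exact h3 ▸ Nat.dvd_of_mod_eq_zero hv
    have hdvd2 : m ∣ i.val := (Nat.mul_dvd_mul_iff_left (by omega : 0 < 2)).mp hdvd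
    rcases hdvd2 with ⟨c, hc⟩
    have hc2 : c ≤ 1 := by nlinarith
    interval_cases c
    · left
      apply ZMod.val_injective
      simp only [ZMod.val_zero]; omega
    · right
      apply ZMod.val_injective
      rw [cast_m_val hm]; omega
  · rintro (rfl | rfl)
    · ring
    · exact two_mul_m

lemma neg_self_iff {i : ZMod (2*m)} : i = -i ↔ 2 * i = 0 := by
  constructor
  · intro h; linear_combination h
  · intro h; linear_combination h

lemma val_neg_cases (hm : 2 ≤ m) {i : ZMod (2*m)} (h : i ≠ -i) :
    ((i.val < m) ↔ ¬ ((-i).val < m)) := by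
  have hne0 : i ≠ 0 := by rintro rfl; simp at h
  have hne2 : 2 * i ≠ 0 := fun hc => h (neg_self_iff.mpr hc)
  have hvm : i.val ≠ m := by
    intro hv
    apply hne2
    have : i = (m : ZMod (2*m)) := by
      apply ZMod.val_injective; rw [cast_m_val hm, hv]
    rw [this]; exact two_mul_m
  have hneg : (-i).val = 2*m - i.val := by
    rw [ZMod.neg_val, if_neg hne0]
  have h0 : i.val ≠ 0 := fun hc => hne0 (by
    apply ZMod.val_injective; simpa using hc)
  have hlt : i.val < 2*m := ZMod.val_lt i
  omega

lemma exists_double (hm : 2 ≤ m) (c : ZMod (2*m)) : ∃ t : ZMod (2*m), 2*t = c ∨ 2*t = c - 1 := by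
  have hc : ((c.val : ℕ) : ZMod (2*m)) = c := by rw [ZMod.natCast_val, ZMod.cast_id]
  rcases Nat.even_or_odd c.val with ⟨v, hv⟩ | ⟨v, hv⟩
  · refine ⟨(v : ZMod (2*m)), Or.inl ?_⟩
    rw [← hc, hv]; push_cast; ring
  · refine ⟨(v : ZMod (2*m)), Or.inr ?_⟩
    have h2 : c = 2*(v : ZMod (2*m)) + 1 := by rw [← hc, hv]; push_cast; ring
    linear_combination -h2

lemma two_mul_ne_one (hm : 2 ≤ m) (t : ZMod (2*m)) : 2 * t ≠ 1 := by
  intro h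
  have h1 : (1 : ZMod (2*m)).val = 1 := by rw [ZMod.val_one_eq_one_mod]; exact Nat.mod_eq_of_lt (by omega)
  have hval := val_two_mul t
  rw [h, h1] at hval
  have hlt : t.val < 2*m := ZMod.val_lt t
  have h2 : 2 ∣ (t.val + t.val) % (2 * m) := (Nat.dvd_mod_iff ⟨m, rfl⟩).mpr ⟨t.val, by ring⟩
  rw [← hval] at h2
  exact absurd h2 (by norm_num)

lemma two_mul_ne_negone (hm : 2 ≤ m) (t : ZMod (2*m)) : 2 * t ≠ -1 := by
  intro h
  have : 2 * (-t + (m:ZMod (2*m))) = 1 := by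
    have h2 := two_mul_m (m := m)
    linear_combination -h + h2
  exact two_mul_ne_one hm _ this

end
 

/-! ### tuples -/

section Tuples
variable {m k : ℕ} [NeZero (2*m)]

local notation "G" => DihedralGroup (2*m)
open DihedralGroup

def Pcomm (x : Fin k → G) : Prop := ∀ i j, Commute (x i) (x j)

def cj (g : G) (x : Fin k → G) : Fin k → G := fun j => g * x j * g⁻¹

def RotT (x : Fin k → G) : Prop := ∀ j, IsRot (x j)

def negCanon (a : Fin k → ZMod (2*m)) : Prop :=
  ∀ j0, IsFirst (fun j => a j ≠ - a j) j0 → (a j0).val < m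

def NF (x : Fin k → G) : Prop :=
  (∀ j0, IsFirst (fun j => ¬ IsRot (x j)) j0 → x j0 = sr 0 ∨ x j0 = sr 1) ∧
  (RotT x → negCanon (fun j => ex (x j)))

lemma neg_ne_iff (i : ZMod (2*m)) : (- i ≠ - (- i)) ↔ (i ≠ - i) := by
  rw [neg_neg]
  exact not_congr ⟨fun h => by linear_combination -h, fun h => by linear_combination -h⟩

lemma exists_r_of_isRot {u : DihedralGroup (2*m)} (h : IsRot u) : ∃ i, u = DihedralGroup.r i := by
  cases u
  · exact ⟨_, rfl⟩
  · exact absurd h (isRot_sr _)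

lemma eq_r_of_isRot {u : G} (h : IsRot u) : u = r (ex u) := by
  cases u
  · rfl
  · exact absurd h (isRot_sr _)

lemma exists_sr_of_not_isRot {u : G} (h : ¬ IsRot u) : ∃ c, u = sr c := by
  cases u
  · exact absurd trivial h
  · exact ⟨_, rfl⟩

lemma pcomm_cj {x : Fin k → G} (g : G) (hx : Pcomm x) : Pcomm (cj g x) := by
  intro i j
  have := (hx i j).map (MulAut.conj g)
  simpa [cj, MulAut.conj_apply, mul_assoc] using this

lemma rotT_cj_iff {x : Fin k → G} (g : G) : RotT (cj g x) ↔ RotT x := by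
  unfold RotT cj
  exact forall_congr' fun j => isRot_conj g (x j)

lemma negCanon_of_not (hm : 2 ≤ m) {a : Fin k → ZMod (2*m)} (h : ¬ negCanon a) :
    negCanon (fun j => - a j) := by
  unfold negCanon at h
  push_neg at h
  obtain ⟨j0, hj0, hval⟩ := h
  intro j1 hj1
  have hj1' : IsFirst (fun j => a j ≠ - a j) j1 := isFirst_congr (fun j => neg_ne_iff (a j)) hj1
  have := isFirst_unique hj1' hj0
  subst this
  have hne : a j1 ≠ - a j1 := hj0.1
  by_contra hc
  exact absurd ((val_neg_cases hm hne).mpr hc) (not_lt.mpr hval)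

lemma not_negCanon_neg (hm : 2 ≤ m) {a : Fin k → ZMod (2*m)} (h : negCanon a)
    (hne : ∃ j, a j ≠ - a j) : ¬ negCanon (fun j => - a j) := by
  intro hcontra
  obtain ⟨j0, hj0⟩ := exists_isFirst hne
  have hv := h j0 hj0
  have hv2 := hcontra j0 (isFirst_congr (fun j => (neg_ne_iff (a j)).symm) hj0)
  exact (val_neg_cases hm hj0.1).mp hv hv2

lemma negCanon_all_selfneg {a : Fin k → ZMod (2*m)} (h : ∀ j, a j = - a j) :
    negCanon a := by
  intro j0 hj0
  exact absurd (h j0) hj0.1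

theorem exists_nf (hm : 2 ≤ m) (x : Fin k → G) (hx : Pcomm x) : ∃ g : G, NF (cj g x) := by
  by_cases hA : RotT x
  · by_cases hC : negCanon (fun j => ex (x j))
    · refine ⟨1, ?_, ?_⟩
      · intro j0 hj0
        exact absurd (by simpa [cj] using hA j0) hj0.1
      · intro _
        have : ∀ j, cj 1 x j = x j := by intro j; simp [cj]
        simpa [this] using hC
    · refine ⟨sr 0, ?_, ?_⟩
      · intro j0 hj0
        exfalso
        exact hj0.1 ((isRot_conj _ _).mpr (hA j0))
      · intro _
        have hval : ∀ j, cj (sr 0) x j = r (- ex (x j)) := by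
          intro j
          obtain ⟨i, hi⟩ := exists_r_of_isRot (hA j)
          rw [cj, hi, conj_sr_r, ex_r]
        have hnc := negCanon_of_not hm hC
        intro j0 hj0
        have hsame : ∀ j, ((fun j => ex (cj (sr 0) x j)) j ≠ - (fun j => ex (cj (sr 0) x j)) j)
            ↔ ((fun j => - ex (x j)) j ≠ - (fun j => - ex (x j)) j) := by
          intro j; simp only [hval j, ex_r]
        have hj0' := isFirst_congr hsame hj0
        have hres := hnc j0 hj0'
        simpa only [hval j0, ex_r] using hres
  · have hsr : ∃ j, ¬ IsRot (x j) := not_forall.mp hA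
    obtain ⟨j0, hj0⟩ := exists_isFirst hsr
    obtain ⟨c, hc⟩ := exists_sr_of_not_isRot hj0.1
    obtain ⟨t, ht⟩ := exists_double hm c
    refine ⟨r t, ?_, ?_⟩
    · intro j1 hj1
      have hsame : ∀ j, (¬ IsRot (cj (r t) x j)) ↔ (¬ IsRot (x j)) := by
        intro j; rw [cj]; exact not_congr (isRot_conj _ _)
      have hj1' := isFirst_congr hsame hj1
      have hj10 : j1 = j0 := isFirst_unique hj1' hj0
      subst hj10
      have hval : cj (r t) x j1 = sr (c - 2*t) := by
        rw [cj, hc, conj_r_sr]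
      rcases ht with ht | ht
      · left; rw [hval]; congr 1; linear_combination -ht
      · right; rw [hval]; congr 1; linear_combination -ht
    · intro hR
      exfalso
      exact hj0.1 ((rotT_cj_iff (r t)).mp hR j0)

theorem nf_unique (hm : 2 ≤ m) (x y : Fin k → G) (g : G) (hx : Pcomm x)
    (hnx : NF x) (hny : NF y) (h : ∀ j, g * x j * g⁻¹ = y j) : x = y := by
  have hyx : ∀ j, y j = cj g x j := fun j => (h j).symm
  by_cases hA : RotT x
  · have hAy : RotT y := by
      intro j; rw [hyx j]; exact (isRot_conj _ _).mpr (hA j)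
    have hxr : ∀ j, x j = r (ex (x j)) := fun j => eq_r_of_isRot (hA j)
    cases g with
    | r t =>
      funext j
      rw [hyx j, cj, hxr j, conj_r_r, ← hxr j]
    | sr t =>
      have hyval : ∀ j, y j = r (- ex (x j)) := by
        intro j
        obtain ⟨i, hi⟩ := exists_r_of_isRot (hA j)
        rw [hyx j, cj, hi, conj_sr_r, ex_r]
      have hcx : negCanon (fun j => ex (x j)) := hnx.2 hA
      have hcy : negCanon (fun j => ex (y j)) := hny.2 hAy
      have hcy' : negCanon (fun j => - ex (x j)) := by
        intro j0 hj0
        have hsame : ∀ j, ((fun j => - ex (x j)) j ≠ - (fun j => - ex (x j)) j)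
            ↔ ((fun j => ex (y j)) j ≠ - (fun j => ex (y j)) j) := by
          intro j; simp only [hyval j, ex_r]
        have hh := hcy j0 (isFirst_congr hsame hj0)
        simpa only [hyval j0, ex_r] using hh
      have hall : ∀ j, ex (x j) = - ex (x j) := by
        by_contra hco
        push_neg at hco
        exact not_negCanon_neg hm hcx hco hcy'
      funext j
      rw [hyval j, ← hall j, ← hxr j]
  · have hsr : ∃ j, ¬ IsRot (x j) := not_forall.mp hA
    obtain ⟨j0, hj0⟩ := exists_isFirst hsr
    have hj0y : IsFirst (fun j => ¬ IsRot (y j)) j0 := by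
      refine isFirst_congr (fun j => ?_) hj0
      rw [hyx j, cj]
      exact (not_congr (isRot_conj _ _)).symm
    obtain ⟨c, hc⟩ := exists_sr_of_not_isRot hj0.1
    have hcval : c = 0 ∨ c = 1 := by
      rcases hnx.1 j0 hj0 with h1 | h1 <;> rw [hc] at h1 <;> [left; right] <;> injection h1
    have hy0 : y j0 = sr 0 ∨ y j0 = sr 1 := hny.1 j0 hj0y
    have hkey : (∀ i : ZMod (2*m), 2*i = 0 → g * r i * g⁻¹ = r i) ∧
        (∀ d : ZMod (2*m), 2*d = 2*c → g * sr d * g⁻¹ = sr d) := by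
      cases g with
      | r t =>
        have hyj0 : y j0 = sr (c - 2*t) := by rw [hyx j0, cj, hc, conj_r_sr]
        have hceq : c - 2*t = 0 ∨ c - 2*t = 1 := by
          rcases hy0 with h1 | h1 <;> rw [hyj0] at h1 <;> [left; right] <;> injection h1
        have h2t : 2 * t = 0 := by
          rcases hcval with rfl | rfl <;> rcases hceq with h1 | h1
          · linear_combination -h1
          · exfalso; exact two_mul_ne_negone hm t (by linear_combination -h1)
          · exfalso; exact two_mul_ne_one hm t (by linear_combination -h1)
          · linear_combination -h1
        refine ⟨fun i _ => conj_r_r t i, fun d _ => ?_⟩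
        rw [conj_r_sr]; congr 1; linear_combination -h2t
      | sr t =>
        have hyj0 : y j0 = sr (2*t - c) := by rw [hyx j0, cj, hc, conj_sr_sr]
        have hceq : 2*t - c = 0 ∨ 2*t - c = 1 := by
          rcases hy0 with h1 | h1 <;> rw [hyj0] at h1 <;> [left; right] <;> injection h1
        have h2t : 2 * t = 2 * c := by
          rcases hcval with rfl | rfl <;> rcases hceq with h1 | h1
          · linear_combination h1
          · exfalso; exact two_mul_ne_one hm t (by linear_combination h1)
          · exfalso; exact two_mul_ne_one hm t (by linear_combination h1)
          · linear_combination h1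
        refine ⟨fun i hi => ?_, fun d hd => ?_⟩
        · rw [conj_sr_r]; congr 1; linear_combination -hi
        · rw [conj_sr_sr]; congr 1; linear_combination h2t - hd
    funext j
    have hcomm : Commute (x j) (x j0) := hx j j0
    rw [hc] at hcomm
    cases hxj : x j with
    | r i =>
      rw [hxj] at hcomm
      have h2i : 2 * i = 0 := (commute_r_sr_iff i c).mp hcomm
      rw [← h j, hxj, hkey.1 i h2i]
    | sr d =>
      rw [hxj] at hcomm
      have h2d : 2 * d = 2 * c := (commute_sr_sr_iff d c).mp hcomm
      rw [← h j, hxj, hkey.2 d h2d]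


theorem betaCount_eq_card_nf (hm : 2 ≤ m) :
    betaCount (DihedralGroup (2*m)) k
      = Nat.card {x : Fin k → DihedralGroup (2*m) // Pcomm x ∧ NF x} := by
  classical
  unfold betaCount
  apply Nat.card_congr
  have hnfg : ∀ x : CommTuple (DihedralGroup (2*m)) k, ∃ g, NF (cj g x.1) :=
    fun x => exists_nf hm x.1 x.2
  set nfg : CommTuple (DihedralGroup (2*m)) k → DihedralGroup (2*m) :=
    fun x => Classical.choose (hnfg x) with hnfgdef
  have hnf : ∀ x, NF (cj (nfg x) x.1) := fun x => Classical.choose_spec (hnfg x)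
  have hrel : ∀ (x : CommTuple (DihedralGroup (2*m)) k) g,
      simulConjRel (DihedralGroup (2*m)) k x.1 (cj g x.1) :=
    fun x g => ⟨g, fun i => rfl⟩
  have hwd : ∀ x y : CommTuple (DihedralGroup (2*m)) k,
      simulConjRel (DihedralGroup (2*m)) k x.1 y.1 →
      cj (nfg x) x.1 = cj (nfg y) y.1 := by
    intro x y ⟨g0, hg0⟩
    apply nf_unique hm _ _ ((nfg y) * g0 * (nfg x)⁻¹) (pcomm_cj _ x.2) (hnf x) (hnf y)
    intro j
    simp only [cj, mul_inv_rev, inv_inv]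
    have h1 := hg0 j
    group
    rw [← h1]
    group
  refine ⟨Quot.lift (fun x => (⟨cj (nfg x) x.1, pcomm_cj _ x.2, hnf x⟩ :
      {x : Fin k → DihedralGroup (2*m) // Pcomm x ∧ NF x}))
      (fun x y h => Subtype.ext (hwd x y h)),
    fun s => Quot.mk _ ⟨s.1, s.2.1⟩, ?_, ?_⟩
  · intro q
    induction q using Quot.ind with
    | _ x =>
      apply Quot.sound
      exact ⟨(nfg x)⁻¹, fun i => by simp only [cj]; group⟩
  · intro s
    apply Subtype.ext
    exact (nf_unique hm s.1 _ (nfg ⟨s.1, s.2.1⟩) s.2.1 s.2.2 (hnf ⟨s.1, s.2.1⟩)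
      (fun j => rfl)).symm


/-! ### counting: generic split -/

lemma card_split {α : Type*} [Finite α] (P A : α → Prop) :
    Nat.card {x // P x} = Nat.card {x // P x ∧ A x} + Nat.card {x // P x ∧ ¬ A x} := by
  classical
  rw [← Nat.card_sum]
  apply Nat.card_congr
  calc {x // P x} ≃ {y : {x // P x} // A y.1} ⊕ {y : {x // P x} // ¬ A y.1} :=
        (Equiv.sumCompl _).symm
    _ ≃ {x // P x ∧ A x} ⊕ {x // P x ∧ ¬ A x} :=
        Equiv.sumCongr (Equiv.subtypeSubtypeEquivSubtypeInter P A)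
          (Equiv.subtypeSubtypeEquivSubtypeInter P (fun x => ¬ A x))

/-! ### counting : rotational side -/

def rot_equiv (hm : 2 ≤ m) :
    {x : Fin k → DihedralGroup (2*m) // (Pcomm x ∧ NF x) ∧ RotT x}
      ≃ {a : Fin k → ZMod (2*m) // negCanon a} where
  toFun x := ⟨fun j => ex (x.1 j), x.2.1.2.2 x.2.2⟩
  invFun a := ⟨fun j => DihedralGroup.r (a.1 j), by
    refine ⟨⟨fun i j => ?_, fun j0 hj0 => absurd trivial hj0.1, fun _ => ?_⟩, fun j => trivial⟩
    · unfold Commute SemiconjBy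
      simp [add_comm]
    · simpa using a.2⟩
  left_inv x := by
    apply Subtype.ext
    funext j
    exact (eq_r_of_isRot (x.2.2 j)).symm
  right_inv a := by
    apply Subtype.ext
    funext j
    rfl

lemma exists_nonselfneg_of_not_negCanon {a : Fin k → ZMod (2*m)} (h : ¬ negCanon a) :
    ∃ j, a j ≠ - a j := by
  by_contra hc
  push_neg at hc
  exact h (negCanon_all_selfneg hc)

noncomputable def negA_equiv (hm : 2 ≤ m) :
    (Fin k → ZMod (2*m)) ≃
      {a : Fin k → ZMod (2*m) // negCanon a}
        ⊕ {a : Fin k → ZMod (2*m) // negCanon a ∧ ∃ j, a j ≠ - a j} := by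
  classical
  refine ⟨fun a => if h : negCanon a then Sum.inl ⟨a, h⟩ else
      Sum.inr ⟨fun j => - a j, negCanon_of_not hm h, ?_⟩,
    Sum.elim (fun a => a.1) (fun b => fun j => - b.1 j), ?_, ?_⟩
  · obtain ⟨j, hj⟩ := exists_nonselfneg_of_not_negCanon h
    exact ⟨j, (neg_ne_iff (a j)).mpr hj⟩
  · intro a
    by_cases h : negCanon a
    · simp [h]
    · simp only [h, dif_neg, not_false_iff, Sum.elim_inr]
      funext j
      simp
  · rintro (⟨a, h⟩ | ⟨b, hb, hex⟩)
    · simp [h]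
    · have hnc : ¬ negCanon (fun j => - b j) := not_negCanon_neg hm hb hex
      simp only [Sum.elim_inr, hnc, dif_neg, not_false_iff]
      refine (dif_neg hnc).trans ?_
      congr 1
      apply Subtype.ext
      funext j
      simp

def selfneg_equiv_bool (hm : 2 ≤ m) :
    {i : ZMod (2*m) // i = - i} ≃ Bool := by
  haveI : NeZero (2*m) := ⟨by omega⟩
  have hm0 : ((m : ZMod (2*m))) ≠ 0 := by
    intro h
    have := congrArg ZMod.val h
    rw [cast_m_val hm, ZMod.val_zero] at this
    omega
  refine ⟨fun i => decide (i.1 = (m : ZMod (2*m))),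
    fun b => if b then ⟨(m : ZMod (2*m)), neg_self_iff.mpr two_mul_m⟩
      else ⟨0, by simp⟩, ?_, ?_⟩
  · rintro ⟨i, hi⟩
    rcases (two_mul_eq_zero_iff hm).mp (neg_self_iff.mp hi) with rfl | rfl
    · simp [hm0.symm]
    · simp
  · rintro (_ | _) <;> simp [hm0.symm]

lemma card_A (hm : 2 ≤ m) :
    2 * Nat.card {a : Fin k → ZMod (2*m) // negCanon a} = (2*m)^k + 2^k := by
  classical
  have h1 : (2*m)^k = Nat.card {a : Fin k → ZMod (2*m) // negCanon a}
      + Nat.card {a : Fin k → ZMod (2*m) // negCanon a ∧ ∃ j, a j ≠ - a j} := by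
    rw [← Nat.card_sum, ← Nat.card_congr (negA_equiv hm)]
    simp [Nat.card_fun, Nat.card_zmod]
  have h2 : Nat.card {a : Fin k → ZMod (2*m) // negCanon a}
      = Nat.card {a : Fin k → ZMod (2*m) // negCanon a ∧ ∃ j, a j ≠ - a j} + 2^k := by
    rw [card_split (negCanon (m := m) (k := k)) (fun a => ∃ j, a j ≠ - a j)]
    congr 1
    have e1 : {a : Fin k → ZMod (2*m) // negCanon a ∧ ¬ ∃ j, a j ≠ - a j}
        ≃ {a : Fin k → ZMod (2*m) // ∀ j, a j = - a j} := by
      apply Equiv.subtypeEquivRight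
      intro a
      constructor
      · intro ⟨_, h⟩ j
        by_contra hc
        exact h ⟨j, hc⟩
      · intro h
        exact ⟨negCanon_all_selfneg h, fun ⟨j, hj⟩ => hj (h j)⟩
    have e2 : {a : Fin k → ZMod (2*m) // ∀ j, a j = - a j}
        ≃ (Fin k → {i : ZMod (2*m) // i = - i}) :=
      Equiv.subtypePiEquivPi (p := fun (_ : Fin k) (b : ZMod (2*m)) => b = - b)
    rw [Nat.card_congr e1, Nat.card_congr e2, Nat.card_fun,
      Nat.card_congr (selfneg_equiv_bool hm)]
    simp
  rw [two_mul, h1, h2]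
  ring


/-! ### counting : reflection side -/

lemma m_ne_zero' (hm : 2 ≤ m) : (m : ZMod (2*m)) ≠ 0 := by
  intro h
  have := congrArg ZMod.val h
  rw [cast_m_val hm, ZMod.val_zero] at this
  omega

lemma val_one' (hm : 2 ≤ m) : (1 : ZMod (2*m)).val = 1 := by
  rw [ZMod.val_one_eq_one_mod]; exact Nat.mod_eq_of_lt (by omega)

lemma val_one_add_m (hm : 2 ≤ m) : ((1 : ZMod (2*m)) + (m : ZMod (2*m))).val = 1 + m := by
  rw [ZMod.val_add, val_one' hm, cast_m_val hm]
  exact Nat.mod_eq_of_lt (by omega)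

def decode (p : Bool) (u : Bool × Bool) : DihedralGroup (2*m) :=
  match u with
  | (false, b) => DihedralGroup.r (if b then (m : ZMod (2*m)) else 0)
  | (true, b) => DihedralGroup.sr ((if p then 1 else 0) + (if b then (m : ZMod (2*m)) else 0))

lemma two_mul_if (b : Bool) : 2 * (if b then (m : ZMod (2*m)) else 0) = 0 := by
  cases b
  · simp
  · simpa using two_mul_m

lemma commute_decode (p : Bool) (u v : Bool × Bool) :
    Commute (decode (m := m) p u) (decode (m := m) p v) := by
  obtain ⟨u1, u2⟩ := u
  obtain ⟨v1, v2⟩ := v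
  cases u1 <;> cases v1 <;> simp only [decode]
  · unfold Commute SemiconjBy
    simp [add_comm]
  · exact (commute_r_sr_iff _ _).mpr (two_mul_if u2)
  · exact ((commute_r_sr_iff _ _).mpr (two_mul_if v2)).symm
  · apply (commute_sr_sr_iff _ _).mpr
    rw [mul_add, mul_add, two_mul_if, two_mul_if]

lemma not_isRot_decode (p : Bool) (u : Bool × Bool) :
    ¬ IsRot (decode (m := m) p u) ↔ u.1 = true := by
  obtain ⟨u1, u2⟩ := u
  cases u1 <;> simp [decode]

def Wcond (f : Fin k → Bool × Bool) : Prop :=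
  (∃ j, (f j).1 = true) ∧ ∀ j0, IsFirst (fun j => (f j).1 = true) j0 → (f j0).2 = false

lemma srarg_inj (hm : 2 ≤ m) {p q b c : Bool}
    (h : ((if p then 1 else 0) + (if b then (m : ZMod (2*m)) else 0) : ZMod (2*m))
       = (if q then 1 else 0) + (if c then (m : ZMod (2*m)) else 0)) : p = q ∧ b = c := by
  have hv := congrArg ZMod.val h
  cases p <;> cases q <;> cases b <;> cases c <;>
    first
    | exact ⟨rfl, rfl⟩
    | (exfalso
       simp only [if_true, if_false, Bool.false_eq_true, Bool.true_eq_false, ite_true,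
         ite_false, zero_add, add_zero] at hv
       simp only [ZMod.val_zero, val_one' hm, cast_m_val hm, val_one_add_m hm] at hv
       omega)

lemma rarg_inj (hm : 2 ≤ m) {b c : Bool}
    (h : ((if b then (m : ZMod (2*m)) else 0) : ZMod (2*m)) = if c then (m : ZMod (2*m)) else 0) :
    b = c := by
  have hv := congrArg ZMod.val h
  cases b <;> cases c <;>
    first
    | rfl
    | (exfalso
       simp only [if_true, if_false, Bool.false_eq_true, Bool.true_eq_false, ite_true,
         ite_false] at hv
       simp only [ZMod.val_zero, cast_m_val hm] at hv
       omega)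

lemma decode_fst_eq {p q : Bool} {u v : Bool × Bool}
    (h : (decode p u : DihedralGroup (2*m)) = decode q v) : u.1 = v.1 := by
  obtain ⟨u1, u2⟩ := u
  obtain ⟨v1, v2⟩ := v
  cases u1 <;> cases v1 <;> simp_all [decode]

lemma mem_decode (hm : 2 ≤ m) (p : Bool) (f : Fin k → Bool × Bool) (hf : Wcond f) :
    (Pcomm (fun j => decode (m := m) p (f j)) ∧ NF (fun j => decode (m := m) p (f j)))
      ∧ ¬ RotT (fun j => decode (m := m) p (f j)) := by
  have hiff : ∀ j, (¬ IsRot (decode (m := m) p (f j))) ↔ ((f j).1 = true) :=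
    fun j => not_isRot_decode p (f j)
  refine ⟨⟨fun i j => commute_decode p _ _, ?_, ?_⟩, ?_⟩
  · intro j0 hj0
    have hj0' := isFirst_congr hiff hj0
    have h1 : (f j0).1 = true := hj0'.1
    have h2 : (f j0).2 = false := hf.2 j0 hj0'
    have hfj0 : f j0 = (true, false) := by rw [← h1, ← h2]
    simp only [hfj0]
    cases p
    · left; simp [decode]
    · right; simp [decode]
  · intro hR
    exfalso
    obtain ⟨j, hj⟩ := hf.1
    exact ((hiff j).mpr hj) (hR j)
  · intro hR
    obtain ⟨j, hj⟩ := hf.1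
    exact ((hiff j).mpr hj) (hR j)

noncomputable def reflFun (hm : 2 ≤ m) (pf : Bool × {f : Fin k → Bool × Bool // Wcond f}) :
    {x : Fin k → DihedralGroup (2*m) // (Pcomm x ∧ NF x) ∧ ¬ RotT x} :=
  ⟨fun j => decode pf.1 (pf.2.1 j), mem_decode hm pf.1 pf.2.1 pf.2.2⟩

lemma reflFun_bij (hm : 2 ≤ m) : Function.Bijective (reflFun (m := m) (k := k) hm) := by
  constructor
  · rintro ⟨p, f, hf⟩ ⟨q, g, hg⟩ h
    have hj : ∀ j, (decode p (f j) : DihedralGroup (2*m)) = decode q (g j) :=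
      fun j => congrFun (congrArg Subtype.val h) j
    have h1 : ∀ j, (f j).1 = (g j).1 := fun j => decode_fst_eq (hj j)
    have hp : p = q := by
      obtain ⟨j, hjt⟩ := hf.1
      have h2 := hj j
      rcases hfe : f j with ⟨u1, u2⟩
      rcases hge : g j with ⟨v1, v2⟩
      rw [hfe] at hjt h2
      rw [hge] at h2
      have h1j := h1 j
      rw [hfe, hge] at h1j
      dsimp only at h1j hjt
      subst hjt
      have hv1 : v1 = true := h1j.symm
      subst hv1
      simp only [decode] at h2
      have h3 : ((if p then 1 else 0) + (if u2 then (m : ZMod (2*m)) else 0) : ZMod (2*m))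
          = (if q then 1 else 0) + (if v2 then (m : ZMod (2*m)) else 0) := by injection h2
      exact (srarg_inj hm h3).1
    subst hp
    have h3 : ∀ j, f j = g j := by
      intro j
      have h2 := hj j
      rcases hfe : f j with ⟨u1, u2⟩
      rcases hge : g j with ⟨v1, v2⟩
      have h1j := h1 j
      rw [hfe, hge] at h1j
      dsimp at h1j
      subst h1j
      rw [hfe, hge] at h2
      cases u1
      · simp only [decode] at h2
        have h4 : ((if u2 then (m : ZMod (2*m)) else 0) : ZMod (2*m))
            = if v2 then (m : ZMod (2*m)) else 0 := by injection h2
        rw [rarg_inj hm h4]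
      · simp only [decode] at h2
        have h4 : ((if p then 1 else 0) + (if u2 then (m : ZMod (2*m)) else 0) : ZMod (2*m))
            = (if p then 1 else 0) + (if v2 then (m : ZMod (2*m)) else 0) := by injection h2
        rw [(srarg_inj hm h4).2]
    have : f = g := funext h3
    subst this
    rfl
  · rintro ⟨x, ⟨hcomm, hnf⟩, hnrot⟩
    have hnrot' : ¬ ∀ j1, IsRot (x j1) := hnrot
    obtain ⟨j, hjn⟩ := not_forall.mp hnrot'
    obtain ⟨j0, hj0⟩ := exists_isFirst (P := fun j1 => ¬ IsRot (x j1)) ⟨j, hjn⟩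
    obtain ⟨p, hp⟩ : ∃ p : Bool, x j0 = DihedralGroup.sr (if p then 1 else 0) := by
      rcases hnf.1 j0 hj0 with h | h
      · exact ⟨false, by simpa using h⟩
      · exact ⟨true, by simpa using h⟩
    set c' : ZMod (2*m) := if p then 1 else 0 with hc'
    set F : DihedralGroup (2*m) → Bool × Bool := fun u =>
      match u with
      | DihedralGroup.r i => (false, decide (i ≠ 0))
      | DihedralGroup.sr d => (true, decide (d ≠ c')) with hF
    have hdec : ∀ j1, (decode p (F (x j1)) : DihedralGroup (2*m)) = x j1 := by
      intro j1
      have hcj : Commute (x j1) (x j0) := hcomm j1 j0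
      rw [hp] at hcj
      cases hxj : x j1 with
      | r i =>
        rw [hxj] at hcj
        rcases (two_mul_eq_zero_iff hm).mp ((commute_r_sr_iff _ _).mp hcj) with rfl | rfl
        · simp [decode, hF, -r_zero]
        · have hmne := m_ne_zero' hm
          simp [decode, hF, hmne]
      | sr d =>
        rw [hxj] at hcj
        have h2d : 2*d = 2*c' := (commute_sr_sr_iff _ _).mp hcj
        have h2 : 2*(d - c') = 0 := by linear_combination h2d
        rcases (two_mul_eq_zero_iff hm).mp h2 with h3 | h3
        · have hd : d = c' := by linear_combination h3
          subst hd
          simp [decode, hF]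
          exact hc'.symm
        · have hd : d = c' + (m : ZMod (2*m)) := by linear_combination h3
          subst hd
          have hne : c' + (m : ZMod (2*m)) ≠ c' := by
            intro hcc
            exact m_ne_zero' hm (by linear_combination hcc)
          simp [decode, hF, hne]
          exact hc'.symm
    have hFsr : ∀ j1, ((F (x j1)).1 = true) ↔ ¬ IsRot (x j1) := by
      intro j1
      cases x j1 <;> simp [hF]
    have hW : Wcond (fun j1 => F (x j1)) := by
      constructor
      · exact ⟨j0, by simp [hp, hF]⟩
      · intro j1 hj1
        have hj1' := isFirst_congr hFsr hj1
        have : j1 = j0 := isFirst_unique hj1' hj0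
        subst this
        simp [hp, hF]
    refine ⟨(p, ⟨fun j1 => F (x j1), hW⟩), ?_⟩
    apply Subtype.ext
    funext j1
    exact hdec j1

def tau (f : Fin k → Bool × Bool) : Fin k → Bool × Bool :=
  fun j => ((f j).1, if (f j).1 then !(f j).2 else (f j).2)

lemma tau_tau (f : Fin k → Bool × Bool) : tau (tau f) = f := by
  funext j
  rcases hfj : f j with ⟨b1, b2⟩
  cases b1 <;> cases b2 <;> simp [tau, hfj]

lemma tau_fst (f : Fin k → Bool × Bool) (j : Fin k) : (tau f j).1 = (f j).1 := rfl

lemma isFirst_tau (f : Fin k → Bool × Bool) (j0 : Fin k) :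
    IsFirst (fun j => (tau f j).1 = true) j0 ↔ IsFirst (fun j => (f j).1 = true) j0 :=
  ⟨isFirst_congr (fun j => by rw [tau_fst]), isFirst_congr (fun j => by rw [tau_fst])⟩

lemma tau_snd_first {f : Fin k → Bool × Bool} {j0 : Fin k}
    (h : IsFirst (fun j => (f j).1 = true) j0) : (tau f j0).2 = !(f j0).2 := by
  have h1 := h.1
  simp only [tau, h1, if_true]

noncomputable def hasT_equiv :
    {f : Fin k → Bool × Bool // ∃ j, (f j).1 = true}
      ≃ ({f : Fin k → Bool × Bool // Wcond f} ⊕ {f : Fin k → Bool × Bool // Wcond f}) := by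
  classical
  refine ⟨fun f => if h : ∀ j0, IsFirst (fun j => (f.1 j).1 = true) j0 → (f.1 j0).2 = false
      then Sum.inl ⟨f.1, f.2, h⟩
      else Sum.inr ⟨tau f.1, ⟨?_, ?_⟩⟩,
    Sum.elim (fun w => ⟨w.1, w.2.1⟩) (fun w => ⟨tau w.1, ?_⟩), ?_, ?_⟩
  · obtain ⟨j, hj⟩ := f.2
    exact ⟨j, by rw [tau_fst]; exact hj⟩
  · intro j0 hj0
    have hj0' := (isFirst_tau f.1 j0).mp hj0
    push_neg at h
    obtain ⟨j1, hj1, hne⟩ := h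
    have : j0 = j1 := isFirst_unique hj0' hj1
    subst this
    rw [tau_snd_first hj0']
    simp only [Bool.not_eq_false] at hne
    rw [hne]
    rfl
  · obtain ⟨j, hj⟩ := w.2.1
    exact ⟨j, by rw [tau_fst]; exact hj⟩
  · rintro ⟨f, hf⟩
    dsimp only
    by_cases h : ∀ j0, IsFirst (fun j => (f j).1 = true) j0 → (f j0).2 = false
    · rw [dif_pos h]
      rfl
    · rw [dif_neg h]
      apply Subtype.ext
      exact tau_tau f
  · rintro (⟨f, hex, hW⟩ | ⟨f, hex, hW⟩)
    · dsimp only [Sum.elim_inl]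
      rw [dif_pos hW]
    · have hnot : ¬ ∀ j0, IsFirst (fun j => (tau f j).1 = true) j0 → (tau f j0).2 = false := by
        intro hcon
        obtain ⟨j0, hj0⟩ := exists_isFirst hex
        have h1 := hcon j0 ((isFirst_tau f j0).mpr hj0)
        rw [tau_snd_first hj0, hW j0 hj0] at h1
        simp at h1
      dsimp only [Sum.elim_inr]
      rw [dif_neg hnot]
      congr 1
      apply Subtype.ext
      exact tau_tau f

def noT_equiv : {f : Fin k → Bool × Bool // ¬ ∃ j, (f j).1 = true} ≃ (Fin k → Bool) where
  toFun f := fun j => (f.1 j).2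
  invFun g := ⟨fun j => (false, g j), by simp⟩
  left_inv f := by
    apply Subtype.ext
    funext j
    have h1 : (f.1 j).1 = false := by
      have := f.2
      push_neg at this
      simpa using this j
    show (false, (f.1 j).2) = f.1 j
    rw [← h1]
  right_inv g := rfl

lemma card_W : 2 * Nat.card {f : Fin k → Bool × Bool // Wcond (k := k) f} + 2^k = 4^k := by
  classical
  have h1 : Nat.card (Fin k → Bool × Bool) = 4^k := by
    rw [Nat.card_fun]
    simp [Nat.card_eq_fintype_card]
  have h2 : Nat.card (Fin k → Bool × Bool)
      = Nat.card {f : Fin k → Bool × Bool // ∃ j, (f j).1 = true}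
        + Nat.card {f : Fin k → Bool × Bool // ¬ ∃ j, (f j).1 = true} := by
    rw [← Nat.card_sum]
    exact Nat.card_congr (Equiv.sumCompl _).symm
  have h3 : Nat.card {f : Fin k → Bool × Bool // ∃ j, (f j).1 = true}
      = 2 * Nat.card {f : Fin k → Bool × Bool // Wcond (k := k) f} := by
    rw [Nat.card_congr (hasT_equiv (k := k)), Nat.card_sum, two_mul]
  have h4 : Nat.card {f : Fin k → Bool × Bool // ¬ ∃ j, (f j).1 = true} = 2^k := by
    rw [Nat.card_congr (noT_equiv (k := k)), Nat.card_fun]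
    simp [Nat.card_eq_fintype_card]
  rw [← h3, ← h4, ← h2, h1]


theorem two_beta (hm : 2 ≤ m) :
    2 * betaCount (DihedralGroup (2*m)) k + 2^k = (2*m)^k + 2*4^k := by
  classical
  have e3 := card_A (m := m) (k := k) hm
  have e5 := card_W (k := k)
  have e4 : Nat.card {x : Fin k → DihedralGroup (2*m) // (Pcomm x ∧ NF x) ∧ ¬ RotT x}
      = 2 * Nat.card {f : Fin k → Bool × Bool // Wcond (k := k) f} := by
    rw [← Nat.card_congr (Equiv.ofBijective _ (reflFun_bij (m := m) (k := k) hm))]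
    rw [Nat.card_prod]
    simp [Nat.card_eq_fintype_card]
  rw [betaCount_eq_card_nf hm,
    card_split (fun x : Fin k → DihedralGroup (2*m) => Pcomm x ∧ NF x) RotT,
    Nat.card_congr (rot_equiv (m := m) (k := k) hm), e4]
  generalize hA : Nat.card {a : Fin k → ZMod (2*m) // negCanon a} = A at e3 ⊢
  generalize hW : Nat.card {f : Fin k → Bool × Bool // Wcond (k := k) f} = Wc at e5 ⊢
  omega

end Tuples

/-! ### power series -/

section PS
open PowerSeries

lemma mk_geom (a : ℚ) : PowerSeries.mk (fun k => a ^ k) * (1 - C (R := ℚ) a * X) = 1 := by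
  have h : PowerSeries.mk (fun k => a ^ k) * (C (R := ℚ) a * X)
      = C (R := ℚ) a * (PowerSeries.mk (fun k => a ^ k) * X) := by ring
  ext d
  rw [mul_sub, mul_one, map_sub, h]
  cases d with
  | zero => simp
  | succ d =>
    rw [coeff_C_mul, coeff_succ_mul_X, coeff_mk, coeff_mk, coeff_one]
    simp [pow_succ]
    ring

lemma inv_geom (a : ℚ) : (1 - C (R := ℚ) a * X)⁻¹ = PowerSeries.mk fun k => a ^ k := by
  rw [PowerSeries.inv_eq_iff_mul_eq_one (by simp)]
  exact mk_geom a

lemma inv_two_geom (b : ℚ) :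
    (C (R := ℚ) 2 * (1 - C (R := ℚ) b * X))⁻¹ = C (R := ℚ) (1/2) * PowerSeries.mk fun k => b ^ k := by
  rw [PowerSeries.inv_eq_iff_mul_eq_one (by simp)]
  have : (C (R := ℚ) (1/2) * PowerSeries.mk fun k => b ^ k) * (C (R := ℚ) 2 * (1 - C (R := ℚ) b * X))
      = (C (R := ℚ) (1/2) * C (R := ℚ) 2) * ((PowerSeries.mk fun k => b ^ k) * (1 - C (R := ℚ) b * X)) := by ring
  rw [this, mk_geom, ← map_mul]
  norm_num

end PS
end DPf

open PowerSeries in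
theorem stmt_18 (n : ℕ) (hn : Even n) (h4 : 4 ≤ n) :
    PowerSeries.mk (fun k => (betaCount (DihedralGroup n) k : ℚ)) =
      (1 - C (R := ℚ) 2 * X)⁻¹ *
        (1 + C (R := ℚ) ((n : ℚ) - 2) * X * (C (R := ℚ) 2 * (1 - C (R := ℚ) (n : ℚ) * X))⁻¹ +
          C (R := ℚ) 2 * X * (1 - C (R := ℚ) 4 * X)⁻¹) := by
  obtain ⟨m, hm⟩ := hn
  have hn2 : n = 2 * m := by omega
  have hm' : 2 ≤ m := by omega
  haveI : NeZero (2*m) := ⟨by omega⟩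
  have hcoeff : ∀ k, (betaCount (DihedralGroup n) k : ℚ)
      = (1/2) * (n:ℚ)^k + (4:ℚ)^k - (1/2) * (2:ℚ)^k := by
    intro k
    have h := DPf.two_beta (m := m) (k := k) hm'
    rw [← hn2] at h
    have h2 := congrArg (fun t : ℕ => (t : ℚ)) h
    push_cast at h2
    linarith [h2]
  have hLHS : PowerSeries.mk (fun k => (betaCount (DihedralGroup n) k : ℚ))
      = C (R := ℚ) (1/2) * PowerSeries.mk (fun k => ((n:ℚ))^k)
        + PowerSeries.mk (fun k => (4:ℚ)^k)
        - C (R := ℚ) (1/2) * PowerSeries.mk (fun k => (2:ℚ)^k) := by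
    ext d
    simp only [coeff_mk, map_add, map_sub, coeff_C_mul]
    rw [hcoeff d]
  rw [hLHS, DPf.inv_geom, DPf.inv_geom, DPf.inv_two_geom]
  have g1 := DPf.mk_geom (2 : ℚ)
  have g2 := DPf.mk_geom ((n : ℚ))
  have g3 := DPf.mk_geom (4 : ℚ)
  have hc2 : C (R := ℚ) (4:ℚ) = C (R := ℚ) 2 + C (R := ℚ) 2 := by rw [← map_add]; norm_num
  have hsub : C (R := ℚ) ((n:ℚ) - 2) = C (R := ℚ) (n:ℚ) - C (R := ℚ) 2 := by rw [map_sub]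
  rw [hsub]
  linear_combination
    (-(C (R := ℚ) (1/2)) * (PowerSeries.mk fun k => ((n:ℚ))^k)
      - (PowerSeries.mk fun k => (4:ℚ)^k)) * g1
    + (C (R := ℚ) (1/2) * (PowerSeries.mk fun k => (2:ℚ)^k)) * g2
    + (PowerSeries.mk fun k => (2:ℚ)^k) * g3
    + (X * (PowerSeries.mk fun k => (2:ℚ)^k) * (PowerSeries.mk fun k => (4:ℚ)^k)) * hc2
end

section
/- Let G be a finite AC-group (every centralizer of a non-central element is abelian). Then B_G(t) = (1/(1−|Z(G)|t))·(1 + Σ_H c_H t/(1−|H|t)), where the sum runs over isomorphism-class representatives H of proper centralizers of non-central elements, and c_H is the number of conjugacy classes of G whose elements have centralizer isomorphic to H. -/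
section Helpers

variable {G : Type*} [Group G]

theorem conj_conj (g a b : G) : (g * a * g⁻¹) * (g * b * g⁻¹) = g * (a * b) * g⁻¹ := by group

theorem mem_cent_conj {x0 y : G} (g : G) (h : x0 * y = y * x0) :
    g * y * g⁻¹ ∈ Subgroup.centralizer {g * x0 * g⁻¹} := by
  rw [Subgroup.mem_centralizer_singleton_iff, conj_conj, conj_conj, h]

theorem conj_eq_of_mem_comm {H : Subgroup G} (hH : IsMulCommutative H) {u v : G}
    (hu : u ∈ H) (hv : v ∈ H) : u * v * u⁻¹ = v := by
  have := Subtype.ext_iff.mp (hH.is_comm.comm (⟨u, hu⟩ : H) (⟨v, hv⟩ : H))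
  simp only [Subgroup.coe_mul] at this
  rw [this, mul_assoc, mul_inv_cancel, mul_one]

theorem center_conj_eq {a : G} (h : a ∈ Subgroup.center G) (g : G) : g * a * g⁻¹ = a := by
  rw [Subgroup.mem_center_iff.mp h g, mul_assoc, mul_inv_cancel, mul_one]

theorem conj_mem_center_iff (g a : G) :
    g * a * g⁻¹ ∈ Subgroup.center G ↔ a ∈ Subgroup.center G := by
  constructor
  · intro h
    have : g⁻¹ * (g * a * g⁻¹) * g⁻¹⁻¹ = a := by group
    rw [← this, center_conj_eq h]
    exact h
  · intro h
    rw [center_conj_eq h]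
    exact h

theorem mk_out_eq (c : ConjClasses G) : ConjClasses.mk (Quotient.out c) = c :=
  (ConjClasses.quotient_mk_eq_mk _).symm.trans c.out_eq

theorem isConj_out (a : G) : IsConj a (Quotient.out (ConjClasses.mk a)) :=
  ConjClasses.mk_eq_mk_iff_isConj.mp (mk_out_eq (ConjClasses.mk a)).symm

open Classical in
/-- Splitting a `Quot` along an invariant predicate. -/
noncomputable def quotSplit {α : Type*} (r : α → α → Prop) (p : α → Prop)
    (hp : ∀ a b, r a b → (p a ↔ p b)) :
    Quot r ≃ (Quot (fun a b : {a // p a} => r a.1 b.1) ⊕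
      Quot (fun a b : {a // ¬ p a} => r a.1 b.1)) where
  toFun := Quot.lift
    (fun a => if h : p a then Sum.inl (Quot.mk _ ⟨a, h⟩) else Sum.inr (Quot.mk _ ⟨a, h⟩))
    (by
      intro a b hab
      by_cases h : p a
      · rw [dif_pos h, dif_pos ((hp a b hab).1 h)]
        exact congrArg _ (Quot.sound hab)
      · rw [dif_neg h, dif_neg (fun hb => h ((hp a b hab).2 hb))]
        exact congrArg _ (Quot.sound hab))
  invFun := Sum.elim (Quot.lift (fun a => Quot.mk r a.1) (fun a b hab => Quot.sound hab))
    (Quot.lift (fun a => Quot.mk r a.1) (fun a b hab => Quot.sound hab))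
  left_inv := by
    intro q
    refine Quot.inductionOn q fun a => ?_
    by_cases h : p a <;> simp [h]
  right_inv := by
    rintro (q | q)
    · refine Quot.inductionOn q fun a => ?_
      simp [a.2]
    · refine Quot.inductionOn q fun a => ?_
      simp [a.2]

/-- The tail of a commuting tuple. -/
def CommTuple.tail {n : ℕ} (x : CommTuple G (n + 1)) : CommTuple G n :=
  ⟨Fin.tail x.1, fun i j => x.2 i.succ j.succ⟩

/-- Orbits of commuting tuples with central head. -/
def centralEquiv (n : ℕ) :
    Quot (fun a b : {x : CommTuple G (n+1) // x.1 0 ∈ Subgroup.center G} =>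
        simulConjRel G (n+1) a.1.1 b.1.1) ≃
      (Subgroup.center G) × Quot (fun x y : CommTuple G n => simulConjRel G n x.1 y.1) where
  toFun := Quot.lift (fun a => (⟨a.1.1 0, a.2⟩, Quot.mk _ a.1.tail))
    (by
      rintro a b ⟨g, hg⟩
      have h0 : a.1.1 0 = b.1.1 0 := by
        rw [← hg 0, center_conj_eq a.2]
      refine Prod.ext (Subtype.ext h0) (Quot.sound ⟨g, fun i => hg i.succ⟩))
  invFun := fun zq => Quot.lift
    (fun t => Quot.mk _ ⟨⟨Fin.cons zq.1.1 t.1, by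
        intro i j
        refine Fin.cases ?_ (fun i' => ?_) i <;> refine Fin.cases ?_ (fun j' => ?_) j <;>
          simp only [Fin.cons_zero, Fin.cons_succ]
        · exact Commute.refl _
        · exact Subgroup.mem_center_iff.mp zq.1.2 _ |>.symm
        · exact Subgroup.mem_center_iff.mp zq.1.2 _
        · exact t.2 i' j'⟩, by
        simpa using zq.1.2⟩)
    (by
      rintro t t' ⟨g, hg⟩
      refine Quot.sound ⟨g, fun i => ?_⟩
      refine Fin.cases ?_ (fun i' => ?_) i <;> simp only [Fin.cons_zero, Fin.cons_succ]
      · exact center_conj_eq zq.1.2 g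
      · exact hg i') zq.2
  left_inv := by
    intro q
    refine Quot.inductionOn q fun a => ?_
    exact congrArg _ (Subtype.ext (Subtype.ext (Fin.cons_self_tail a.1.1)))
  right_inv := by
    rintro ⟨z, q⟩
    refine Quot.inductionOn q fun t => ?_
    refine Prod.ext (Subtype.ext ?_) (congrArg (Quot.mk _) (Subtype.ext ?_))
    · simp [CommTuple.tail]
    · simp [CommTuple.tail]

end Helpers

section NonCentral

variable {G : Type*} [Group G]

/-- The target sigma type for noncentral orbits. -/
def NCT (G : Type*) [Group G] (n : ℕ) : Type _ :=
  Σ c : {c : ConjClasses G // Quotient.out c ∉ Subgroup.center G},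
    (Fin n → Subgroup.centralizer ({Quotient.out c.1} : Set G))

theorem nct_ext {n : ℕ} {x y : NCT G n} (h1 : x.1 = y.1)
    (h2 : ∀ i, ((x.2 i : G)) = ((y.2 i : G))) : x = y := by
  obtain ⟨c, v⟩ := x
  obtain ⟨c', v'⟩ := y
  cases h1
  exact congrArg _ (funext fun i => Subtype.ext (h2 i))

/-- The function from noncentral-headed commuting tuples to the sigma type. -/
noncomputable def ncFun (n : ℕ)
    (a : {x : CommTuple G (n+1) // x.1 0 ∉ Subgroup.center G}) : NCT G n := by
  refine ⟨⟨ConjClasses.mk (a.1.1 0), ?_⟩, fun i => ⟨(Classical.choose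
    (isConj_iff.mp (isConj_out (a.1.1 0)))) * a.1.1 i.succ * (Classical.choose
      (isConj_iff.mp (isConj_out (a.1.1 0))))⁻¹, ?_⟩⟩
  · rw [← Classical.choose_spec (isConj_iff.mp (isConj_out (a.1.1 0))), conj_mem_center_iff]
    exact a.2
  · have hg := Classical.choose_spec (isConj_iff.mp (isConj_out (a.1.1 0)))
    have h2 := mem_cent_conj (Classical.choose (isConj_iff.mp (isConj_out (a.1.1 0))))
      (a.1.2 0 i.succ)
    rwa [hg] at h2

theorem ncFun_fst (n : ℕ) (a : {x : CommTuple G (n+1) // x.1 0 ∉ Subgroup.center G}) :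
    ((ncFun n a).1 : ConjClasses G) = ConjClasses.mk (a.1.1 0) := rfl

theorem ncFun_snd (n : ℕ) (a : {x : CommTuple G (n+1) // x.1 0 ∉ Subgroup.center G}) (i : Fin n) :
    ((ncFun n a).2 i : G) = (Classical.choose
    (isConj_iff.mp (isConj_out (a.1.1 0)))) * a.1.1 i.succ * (Classical.choose
      (isConj_iff.mp (isConj_out (a.1.1 0))))⁻¹ := rfl

theorem ncFun_wd (n : ℕ)
    (hAC : ∀ g : G, g ∉ Subgroup.center G → IsMulCommutative (Subgroup.centralizer {g}))
    (a b : {x : CommTuple G (n+1) // x.1 0 ∉ Subgroup.center G})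
    (hab : simulConjRel G (n+1) a.1.1 b.1.1) : ncFun n a = ncFun n b := by
  obtain ⟨k, hk⟩ := hab
  have hc : ConjClasses.mk (a.1.1 0) = ConjClasses.mk (b.1.1 0) :=
    ConjClasses.mk_eq_mk_iff_isConj.mpr (isConj_iff.mpr ⟨k, hk 0⟩)
  refine nct_ext (Subtype.ext hc) fun i => ?_
  rw [ncFun_snd, ncFun_snd]
  set ga := Classical.choose (isConj_iff.mp (isConj_out (a.1.1 0))) with hga_def
  set gb := Classical.choose (isConj_iff.mp (isConj_out (b.1.1 0))) with hgb_def
  have hga : ga * a.1.1 0 * ga⁻¹ = Quotient.out (ConjClasses.mk (a.1.1 0)) :=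
    Classical.choose_spec (isConj_iff.mp (isConj_out (a.1.1 0)))
  have hgb : gb * b.1.1 0 * gb⁻¹ = Quotient.out (ConjClasses.mk (b.1.1 0)) :=
    Classical.choose_spec (isConj_iff.mp (isConj_out (b.1.1 0)))
  set r := Quotient.out (ConjClasses.mk (a.1.1 0)) with hr_def
  have hrb : Quotient.out (ConjClasses.mk (b.1.1 0)) = r := by rw [← hc]
  rw [hrb] at hgb
  have hrnc : r ∉ Subgroup.center G := by
    rw [← hga, conj_mem_center_iff]
    exact a.2
  -- u := gb * k * ga⁻¹ centralizes r
  have hu : (gb * k * ga⁻¹) ∈ Subgroup.centralizer ({r} : Set G) := by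
    rw [Subgroup.mem_centralizer_singleton_iff]
    have e1 : ga⁻¹ * r * ga = a.1.1 0 := by rw [← hga]; group
    have e2 : (gb * k * ga⁻¹) * r = gb * (k * (ga⁻¹ * r * ga) * k⁻¹) * gb⁻¹ * (gb * k * ga⁻¹) := by
      group
    rw [e2, e1, hk 0, hgb]
  have hmem : ∀ i : Fin n, ga * a.1.1 i.succ * ga⁻¹ ∈ Subgroup.centralizer ({r} : Set G) := by
    intro i
    have h2 := mem_cent_conj ga (a.1.2 0 i.succ)
    rwa [hga] at h2
  have key : gb * b.1.1 i.succ * gb⁻¹ =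
      (gb * k * ga⁻¹) * (ga * a.1.1 i.succ * ga⁻¹) * (gb * k * ga⁻¹)⁻¹ := by
    rw [← hk i.succ]; group
  rw [key, conj_eq_of_mem_comm (hAC r hrnc) hu (hmem i)]

/-- The standard tuple attached to an element of the sigma type. -/
noncomputable def ncTuple (n : ℕ)
    (hAC : ∀ g : G, g ∉ Subgroup.center G → IsMulCommutative (Subgroup.centralizer {g}))
    (s : NCT G n) : {x : CommTuple G (n+1) // x.1 0 ∉ Subgroup.center G} := by
  refine ⟨⟨Fin.cons (Quotient.out s.1.1) (fun i => (s.2 i : G)), ?_⟩, ?_⟩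
  · intro i j
    refine Fin.cases ?_ (fun i' => ?_) i <;> refine Fin.cases ?_ (fun j' => ?_) j <;>
      simp only [Fin.cons_zero, Fin.cons_succ]
    · exact Commute.refl _
    · exact (Subgroup.mem_centralizer_singleton_iff.mp (s.2 j').2).symm
    · exact Subgroup.mem_centralizer_singleton_iff.mp (s.2 i').2
    · exact Subtype.ext_iff.mp ((hAC _ s.1.2).is_comm.comm (s.2 i') (s.2 j'))
  · simpa using s.1.2

theorem ncTuple_zero (n : ℕ)
    (hAC : ∀ g : G, g ∉ Subgroup.center G → IsMulCommutative (Subgroup.centralizer {g}))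
    (s : NCT G n) : (ncTuple n hAC s).1.1 0 = Quotient.out s.1.1 := by
  unfold ncTuple
  simp only []
  exact Fin.cons_zero _ _

theorem ncTuple_succ (n : ℕ)
    (hAC : ∀ g : G, g ∉ Subgroup.center G → IsMulCommutative (Subgroup.centralizer {g}))
    (s : NCT G n) (i : Fin n) : (ncTuple n hAC s).1.1 i.succ = (s.2 i : G) := by
  unfold ncTuple
  simp only []
  exact Fin.cons_succ _ _ _

/-- The orbit space of noncentral-headed commuting tuples. -/
noncomputable def ncEquiv (n : ℕ)
    (hAC : ∀ g : G, g ∉ Subgroup.center G → IsMulCommutative (Subgroup.centralizer {g})) :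
    Quot (fun a b : {x : CommTuple G (n+1) // x.1 0 ∉ Subgroup.center G} =>
      simulConjRel G (n+1) a.1.1 b.1.1) ≃ NCT G n where
  toFun := Quot.lift (ncFun n) (ncFun_wd n hAC)
  invFun := fun s => Quot.mk _ (ncTuple n hAC s)
  left_inv := by
    intro q
    refine Quot.inductionOn q fun a => ?_
    show Quot.mk _ (ncTuple n hAC (ncFun n a)) = Quot.mk _ a
    refine (Quot.sound ⟨Classical.choose (isConj_iff.mp (isConj_out (a.1.1 0))),
      fun i => ?_⟩).symm
    refine Fin.cases ?_ (fun i' => ?_) i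
    · rw [ncTuple_zero]
      exact Classical.choose_spec (isConj_iff.mp (isConj_out (a.1.1 0)))
    · rw [ncTuple_succ]
      rfl
  right_inv := by
    intro s
    show ncFun n (ncTuple n hAC s) = s
    set y := ncTuple n hAC s with hy
    set c := s.1.1 with hcdef
    have e0 : y.1.1 0 = Quotient.out c := ncTuple_zero n hAC s
    have hmk : ConjClasses.mk (y.1.1 0) = c := by rw [e0]; exact mk_out_eq c
    refine nct_ext (Subtype.ext ?_) fun i => ?_
    · rw [ncFun_fst]
      exact hmk
    · rw [ncFun_snd]
      set g' := Classical.choose (isConj_iff.mp (isConj_out (y.1.1 0))) with hg'def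
      have hg' : g' * y.1.1 0 * g'⁻¹ = Quotient.out (ConjClasses.mk (y.1.1 0)) :=
        Classical.choose_spec (isConj_iff.mp (isConj_out (y.1.1 0)))
      have hg2 : g' * Quotient.out c * g'⁻¹ = Quotient.out c := by
        rw [← e0, hg', hmk]
        exact e0.symm
      have hgmem : g' ∈ Subgroup.centralizer ({Quotient.out c} : Set G) := by
        rw [Subgroup.mem_centralizer_singleton_iff]
        have h3 : g' * Quotient.out c = (g' * Quotient.out c * g'⁻¹) * g' := by group
        rw [h3, hg2]
      have etail : y.1.1 i.succ = (s.2 i : G) := ncTuple_succ n hAC s i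
      rw [etail]
      exact conj_eq_of_mem_comm (hAC (Quotient.out c) s.1.2) hgmem (s.2 i).2

end NonCentral

section Counting

variable {G : Type*} [Group G]

instance instFiniteCommTuple [Finite G] (n : ℕ) : Finite (CommTuple G n) :=
  Subtype.finite

theorem nat_card_sigma {ι : Type*} [Fintype ι] {F : ι → Type*} [∀ i, Finite (F i)] :
    Nat.card (Σ i, F i) = ∑ i, Nat.card (F i) := by
  classical
  haveI : ∀ i, Fintype (F i) := fun i => Fintype.ofFinite _
  simp only [Nat.card_eq_fintype_card]
  exact Fintype.card_sigma

theorem beta_zero [Finite G] : betaCount G 0 = 1 := by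
  haveI : Nonempty (Quot (fun x y : CommTuple G 0 => simulConjRel G 0 x.1 y.1)) :=
    ⟨Quot.mk _ ⟨fun i => i.elim0, fun i => i.elim0⟩⟩
  haveI : Subsingleton (Quot (fun x y : CommTuple G 0 => simulConjRel G 0 x.1 y.1)) := by
    constructor
    intro a b
    refine Quot.inductionOn a fun x => ?_
    refine Quot.inductionOn b fun y => ?_
    exact Quot.sound ⟨1, fun i => i.elim0⟩
  exact Nat.card_unique

theorem beta_succ [Finite G]
    (hAC : ∀ g : G, g ∉ Subgroup.center G → IsMulCommutative (Subgroup.centralizer {g}))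
    (n : ℕ) :
    betaCount G (n + 1) =
      Nat.card (Subgroup.center G) * betaCount G n + Nat.card (NCT G n) := by
  have hinv : ∀ a b : CommTuple G (n+1), simulConjRel G (n+1) a.1 b.1 →
      (a.1 0 ∈ Subgroup.center G ↔ b.1 0 ∈ Subgroup.center G) := by
    rintro a b ⟨g, hg⟩
    rw [← hg 0, conj_mem_center_iff]
  rw [betaCount, Nat.card_congr (quotSplit _ _ hinv), Nat.card_sum,
    Nat.card_congr (centralEquiv n), Nat.card_congr (ncEquiv n hAC),
    Nat.card_prod, betaCount]

end Counting

section Regroup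

variable {G : Type*} [Group G]

/-- Conjugation gives an isomorphism of centralizers. -/
noncomputable def centralizerIsoConj (k g : G) :
    Subgroup.centralizer ({g} : Set G) ≃* Subgroup.centralizer ({k * g * k⁻¹} : Set G) where
  toFun y := ⟨k * y.1 * k⁻¹, mem_cent_conj k
    (Subgroup.mem_centralizer_singleton_iff.mp y.2).symm⟩
  invFun y := ⟨k⁻¹ * y.1 * k, by
    have h2 := mem_cent_conj k⁻¹
      (Subgroup.mem_centralizer_singleton_iff.mp y.2).symm
    simp only [inv_inv] at h2
    rwa [show k⁻¹ * (k * g * k⁻¹) * k = g by group] at h2⟩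
  left_inv y := by
    apply Subtype.ext
    show k⁻¹ * (k * y.1 * k⁻¹) * k = y.1
    group
  right_inv y := by
    apply Subtype.ext
    show k * (k⁻¹ * y.1 * k) * k⁻¹ = y.1
    group
  map_mul' a b := by
    apply Subtype.ext
    show k * (a.1 * b.1) * k⁻¹ = (k * a.1 * k⁻¹) * (k * b.1 * k⁻¹)
    group

theorem centralizer_iso_of_isConj {a b : G} (h : IsConj a b) :
    Nonempty (Subgroup.centralizer ({a} : Set G) ≃* Subgroup.centralizer ({b} : Set G)) := by
  obtain ⟨k, hk⟩ := isConj_iff.mp h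
  exact ⟨(centralizerIsoConj k a).trans (MulEquiv.subgroupCongr (by rw [hk]))⟩

theorem noncentral_of_iso
    (hAC : ∀ g : G, g ∉ Subgroup.center G → IsMulCommutative (Subgroup.centralizer {g}))
    {S : Finset (Subgroup G)}
    (hS1 : ∀ H ∈ S, ∃ g : G, g ∉ Subgroup.center G ∧ H = Subgroup.centralizer {g})
    {H : Subgroup G} (HS : H ∈ S) {g : G}
    (e : Subgroup.centralizer ({g} : Set G) ≃* H) : g ∉ Subgroup.center G := by
  intro hg
  have htop : Subgroup.centralizer ({g} : Set G) = ⊤ := by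
    rw [eq_top_iff]
    intro x _
    rw [Subgroup.mem_centralizer_singleton_iff]
    exact Subgroup.mem_center_iff.mp hg x
  have e' : G ≃* H := (Subgroup.topEquiv.symm.trans
    (MulEquiv.subgroupCongr htop.symm)).trans e
  obtain ⟨g', hg', hHg'⟩ := hS1 H HS
  have hcomm : ∀ a b : G, a * b = b * a := by
    intro a b
    have hHcomm : IsMulCommutative H := hHg' ▸ hAC g' hg'
    apply e'.injective
    rw [map_mul, map_mul]
    exact hHcomm.is_comm.comm _ _
  exact hg' (Subgroup.mem_center_iff.mpr fun b => hcomm b g')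

end Regroup

section NctSum

variable {G : Type*} [Group G]

theorem nct_sum [Finite G]
    (hAC : ∀ g : G, g ∉ Subgroup.center G → IsMulCommutative (Subgroup.centralizer {g}))
    {S : Finset (Subgroup G)}
    (hS1 : ∀ H ∈ S, ∃ g : G, g ∉ Subgroup.center G ∧ H = Subgroup.centralizer {g})
    (hS2 : ∀ g : G, g ∉ Subgroup.center G →
      ∃! H, H ∈ S ∧ Nonempty (Subgroup.centralizer {g} ≃* H))
    (n : ℕ) :
    (Nat.card (NCT G n) : ℚ) =
      ∑ H ∈ S, (Nat.card {c : ConjClasses G |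
          ∃ g : G, ConjClasses.mk g = c ∧ Nonempty (Subgroup.centralizer {g} ≃* H)} : ℚ) *
        (Nat.card H : ℚ) ^ n := by
  classical
  haveI : Fintype {c : ConjClasses G // Quotient.out c ∉ Subgroup.center G} := Fintype.ofFinite _
  have h1 : Nat.card (NCT G n) =
      ∑ c : {c : ConjClasses G // Quotient.out c ∉ Subgroup.center G},
        Nat.card (Subgroup.centralizer ({Quotient.out c.1} : Set G)) ^ n := by
    have h2 : Nat.card (NCT G n) =
        ∑ c : {c : ConjClasses G // Quotient.out c ∉ Subgroup.center G},
          Nat.card (Fin n → Subgroup.centralizer ({Quotient.out c.1} : Set G)) :=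
      nat_card_sigma
    rw [h2]
    refine Finset.sum_congr rfl fun c _ => ?_
    rw [Nat.card_fun, Nat.card_eq_fintype_card (α := Fin n), Fintype.card_fin]
  rw [h1]
  push_cast
  set φ : {c : ConjClasses G // Quotient.out c ∉ Subgroup.center G} → Subgroup G :=
    fun c => (hS2 (Quotient.out c.1) c.2).choose with hφdef
  have hmemS : ∀ c, φ c ∈ S := fun c => (hS2 (Quotient.out c.1) c.2).choose_spec.1.1
  have hiso : ∀ c, Nonempty (Subgroup.centralizer ({Quotient.out c.1} : Set G) ≃* φ c) :=
    fun c => (hS2 (Quotient.out c.1) c.2).choose_spec.1.2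
  rw [← Finset.sum_fiberwise_of_maps_to (fun c _ => hmemS c)
    (fun c => (Nat.card (Subgroup.centralizer ({Quotient.out c.1} : Set G)) : ℚ) ^ n)]
  refine Finset.sum_congr rfl fun H HS => ?_
  have hcard : ∀ c ∈ Finset.univ.filter (fun c => φ c = H),
      ((Nat.card (Subgroup.centralizer ({Quotient.out c.1} : Set G)) : ℚ)) ^ n =
        (Nat.card H : ℚ) ^ n := by
    intro c hc
    obtain ⟨e⟩ := hiso c
    rw [Finset.mem_filter] at hc
    rw [Nat.card_congr (e.toEquiv.trans (Equiv.cast (by rw [hc.2])))]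
  rw [Finset.sum_congr rfl hcard, Finset.sum_const, nsmul_eq_mul]
  congr 1
  -- the ℕ-level cardinality identification
  have hout : ∀ c : ConjClasses G,
      (∃ g : G, ConjClasses.mk g = c ∧ Nonempty (Subgroup.centralizer {g} ≃* H)) →
        Quotient.out c ∉ Subgroup.center G := by
    rintro c ⟨g, hg1, ⟨e⟩⟩
    have hgnc : g ∉ Subgroup.center G := noncentral_of_iso hAC hS1 HS e
    have hconj : IsConj g (Quotient.out c) :=
      ConjClasses.mk_eq_mk_iff_isConj.mp (hg1.trans (mk_out_eq c).symm)
    obtain ⟨k, hk⟩ := isConj_iff.mp hconj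
    intro hmem
    apply hgnc
    rw [← hk] at hmem
    exact (conj_mem_center_iff k g).mp hmem
  have hphi : ∀ (c : ConjClasses G)
      (h : ∃ g : G, ConjClasses.mk g = c ∧ Nonempty (Subgroup.centralizer {g} ≃* H)),
      φ ⟨c, hout c h⟩ = H := by
    intro c h
    obtain ⟨g, hg1, ⟨e⟩⟩ := id h
    have hconj : IsConj (Quotient.out c) g :=
      (ConjClasses.mk_eq_mk_iff_isConj.mp (hg1.trans (mk_out_eq c).symm)).symm
    obtain ⟨e2⟩ := centralizer_iso_of_isConj hconj
    exact (hS2 (Quotient.out c) (hout c h)).unique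
      (hS2 (Quotient.out c) (hout c h)).choose_spec.1 ⟨HS, ⟨e2.trans e⟩⟩
  have E : {c : {c : ConjClasses G // Quotient.out c ∉ Subgroup.center G} // φ c = H} ≃
      {c : ConjClasses G |
        ∃ g : G, ConjClasses.mk g = c ∧ Nonempty (Subgroup.centralizer {g} ≃* H)} :=
    { toFun := fun c => ⟨c.1.1, ⟨Quotient.out c.1.1, mk_out_eq _, (hiso c.1).elim
        fun e => ⟨e.trans (MulEquiv.subgroupCongr c.2)⟩⟩⟩
      invFun := fun c => ⟨⟨c.1, hout c.1 c.2⟩, hphi c.1 c.2⟩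
      left_inv := fun c => Subtype.ext (Subtype.ext rfl)
      right_inv := fun c => Subtype.ext rfl }
  have : (Finset.univ.filter (fun c => φ c = H)).card =
      Nat.card {c : {c : ConjClasses G // Quotient.out c ∉ Subgroup.center G} // φ c = H} := by
    rw [Nat.card_eq_fintype_card, Fintype.card_subtype]
  rw [this, Nat.card_congr E]

end NctSum

open PowerSeries in
theorem geom_inv (a : ℚ) : (1 - C a * X)⁻¹ = PowerSeries.mk (fun n => a ^ n) := by
  rw [PowerSeries.inv_eq_iff_mul_eq_one]
  · ext n
    rw [mul_sub, mul_one, mul_comm (PowerSeries.mk _) (C a * X), mul_assoc]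
    cases n with
    | zero => simp
    | succ n =>
      simp [PowerSeries.coeff_C_mul, PowerSeries.coeff_succ_X_mul, pow_succ, mul_comm]
  · simp

open PowerSeries in
theorem reduce_step (G : Type*) [Group G] [Finite G] (S : Finset (Subgroup G))
    (b : ℕ → ℚ) (hb0 : b 0 = 1)
    (hrec : ∀ n : ℕ, b (n + 1) = (Nat.card (Subgroup.center G) : ℚ) * b n +
      ∑ H ∈ S, (Nat.card {c : ConjClasses G |
              ∃ g : G, ConjClasses.mk g = c ∧
                Nonempty (Subgroup.centralizer {g} ≃* H)} : ℚ) * (Nat.card H : ℚ) ^ n) :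
    PowerSeries.mk b =
      (1 - C (Nat.card (Subgroup.center G) : ℚ) * X)⁻¹ *
        (1 + ∑ H ∈ S,
          C (Nat.card {c : ConjClasses G |
              ∃ g : G, ConjClasses.mk g = c ∧
                Nonempty (Subgroup.centralizer {g} ≃* H)} : ℚ) * X *
            (1 - C (Nat.card H : ℚ) * X)⁻¹) := by
  set z : ℚ := (Nat.card (Subgroup.center G) : ℚ)
  have hne : (1 - C z * X) ≠ 0 := by
    intro h
    have := congrArg (PowerSeries.constantCoeff) h
    simp at this
  apply mul_left_cancel₀ hne
  rw [← mul_assoc, geom_inv]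
  have hone : (1 - C z * X) * PowerSeries.mk (fun n => z ^ n) = 1 := by
    rw [mul_comm, ← PowerSeries.inv_eq_iff_mul_eq_one (by simp), geom_inv]
  rw [hone, one_mul]
  simp only [geom_inv]
  ext n
  rw [sub_mul, one_mul]
  cases n with
  | zero =>
    simp [hb0]
  | succ n =>
    rw [map_sub, mul_assoc, PowerSeries.coeff_C_mul, PowerSeries.coeff_succ_X_mul,
      PowerSeries.coeff_mk, PowerSeries.coeff_mk, hrec n]
    rw [map_add, map_sum]
    simp only [mul_assoc, PowerSeries.coeff_C_mul, PowerSeries.coeff_succ_X_mul,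
      PowerSeries.coeff_mk, PowerSeries.coeff_one]
    simp only [Nat.succ_ne_zero, if_false]
    ring

open PowerSeries in
theorem stmt_19 (G : Type*) [Group G] [Finite G]
    (hAC : ∀ g : G, g ∉ Subgroup.center G → IsMulCommutative (Subgroup.centralizer {g}))
    (S : Finset (Subgroup G))
    (hS1 : ∀ H ∈ S, ∃ g : G, g ∉ Subgroup.center G ∧ H = Subgroup.centralizer {g})
    (hS2 : ∀ g : G, g ∉ Subgroup.center G →
      ∃! H, H ∈ S ∧ Nonempty (Subgroup.centralizer {g} ≃* H)) :
    PowerSeries.mk (fun n => (betaCount G n : ℚ)) =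
      (1 - C (Nat.card (Subgroup.center G) : ℚ) * X)⁻¹ *
        (1 + ∑ H ∈ S,
          C (Nat.card {c : ConjClasses G |
              ∃ g : G, ConjClasses.mk g = c ∧
                Nonempty (Subgroup.centralizer {g} ≃* H)} : ℚ) * X *
            (1 - C (Nat.card H : ℚ) * X)⁻¹) := by
  refine reduce_step G S (fun n => (betaCount G n : ℚ)) ?_ ?_
  · show (betaCount G 0 : ℚ) = 1
    exact_mod_cast congrArg (Nat.cast (R := ℚ)) beta_zero
  · intro n
    show (betaCount G (n+1) : ℚ) = _
    rw [beta_succ hAC n]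
    push_cast
    rw [nct_sum hAC hS1 hS2 n]
end
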